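/- There exists a constant K such that the following holds. Let V = {1,…,n}, let m ≥ 3, and let w : {1,…,m} → V be a surjective map such that for every i with 1 < i < m the three values w(i−1), w(i), w(i+1) are pairwise distinct. Let 𝒞 = {(w(i−1) w(i) w(i+1)) : 1 < i < m} be the corresponding set of 3-cycles. Then every even permutation of V can be written as a product of at most K·n³ elements of 𝒞 ∪ 𝒞⁻¹ (i.e., elements of 𝒞 and their inverses). -/

import Mathlib

/-!
Order the vertices by their first visit along the walk. When `u = w (k+2)` is visited for the
first time, right after `a = w k` and `b = w (k+1)`, conjugating by the walk cycle `(a b u)` or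
by its inverse turns every 3-cycle through `u` into a 3-cycle on the vertices visited before,
except for `(a b u)` and `(b a u) = (a b u)⁻¹` themselves. So each new vertex costs at most two
more letters, and every 3-cycle has word length at most `2n` in the walk cycles. An even
permutation is a product of at most `n` 3-cycles, which gives the bound `2n² ≤ 2n³`.
-/

/-- The set of 3-cycles `(w(i-1) w(i) w(i+1))` arising from a walk `w` (0-indexed: triples
of consecutive positions `i, i+1, i+2` with `i + 2 < m`). -/
def walkThreeCycles (n m : ℕ) (w : Fin m → Fin n) : Set (Equiv.Perm (Fin n)) :=
  {π | ∃ i : ℕ, ∃ h : i + 2 < m,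
    π = List.formPerm [w ⟨i, by omega⟩, w ⟨i + 1, by omega⟩, w ⟨i + 2, h⟩]}

open Equiv Equiv.Perm Finset

section WordLength

variable {G : Type*} [Group G] {S T : Set G} {g h t : G} {k l L : ℕ}

def WordLengthLE (S : Set G) (k : ℕ) (g : G) : Prop :=
  ∃ u : List G, u.length ≤ k ∧ (∀ x ∈ u, x ∈ S ∨ x⁻¹ ∈ S) ∧ u.prod = g

namespace WordLengthLE

theorem one : WordLengthLE S 0 1 :=
  ⟨[], le_rfl, by simp, rfl⟩

theorem of_mem (hg : g ∈ S) : WordLengthLE S 1 g :=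
  ⟨[g], le_rfl, by simp [hg], by simp⟩

theorem mono (hg : WordLengthLE S k g) (hkl : k ≤ l) : WordLengthLE S l g :=
  let ⟨u, hu, huS, hug⟩ := hg
  ⟨u, hu.trans hkl, huS, hug⟩

theorem mul (hg : WordLengthLE S k g) (hh : WordLengthLE S l h) :
    WordLengthLE S (k + l) (g * h) := by
  obtain ⟨u, hu, huS, rfl⟩ := hg
  obtain ⟨v, hv, hvS, rfl⟩ := hh
  refine ⟨u ++ v, by simp only [List.length_append]; omega, ?_, List.prod_append⟩
  simp only [List.mem_append]
  rintro x (hx | hx)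
  exacts [huS x hx, hvS x hx]

theorem inv (hg : WordLengthLE S k g) : WordLengthLE S k g⁻¹ := by
  obtain ⟨u, hu, huS, rfl⟩ := hg
  refine ⟨(u.map (·⁻¹)).reverse, by simpa using hu, ?_, (List.prod_inv_reverse u).symm⟩
  simp only [List.mem_reverse, List.mem_map]
  rintro _ ⟨x, hx, rfl⟩
  simpa [or_comm] using huS x hx

theorem conj (ht : WordLengthLE S 1 t) (hg : WordLengthLE S k g) :
    WordLengthLE S (k + 2) (t * g * t⁻¹) :=
  ((ht.mul hg).mul ht.inv).mono (by omega)

theorem list_prod {u : List G} (hu : ∀ x ∈ u, WordLengthLE S L x) :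
    WordLengthLE S (L * u.length) u.prod := by
  induction u with
  | nil => exact one
  | cons x u ih =>
    simpa [Nat.mul_succ, add_comm] using
      (hu x List.mem_cons_self).mul (ih fun y hy => hu y (List.mem_cons_of_mem x hy))

theorem comp (hg : WordLengthLE T k g) (hT : ∀ s ∈ T, WordLengthLE S L s) :
    WordLengthLE S (L * k) g := by
  obtain ⟨u, hu, huT, rfl⟩ := hg
  refine (list_prod fun x hx => ?_).mono (Nat.mul_le_mul_left L hu)
  rcases huT x hx with h | h
  · exact hT x h
  · simpa using (hT _ h).inv

end WordLengthLE

end WordLength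

section ThreeCycles

variable {α : Type*} [DecidableEq α]

theorem conj_formPerm (σ : Perm α) :
    ∀ l : List α, σ * l.formPerm * σ⁻¹ = (l.map σ).formPerm
  | [] => by simp
  | [_] => by simp
  | x :: y :: l => by
    rw [List.map_cons, List.map_cons, List.formPerm_cons_cons, List.formPerm_cons_cons,
      ← List.map_cons, ← conj_formPerm σ (y :: l), swap_apply_apply]
    group

def threeCycles (α : Type*) [DecidableEq α] : Set (Perm α) :=
  {g | ∃ x y z : α, [x, y, z].Nodup ∧ g = [x, y, z].formPerm}

theorem sign_formPerm_three [Fintype α] {x y z : α} (hxy : x ≠ y) (hyz : y ≠ z) :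
    sign [x, y, z].formPerm = 1 := by
  simp [List.formPerm_cons_cons, sign_swap hxy, sign_swap hyz]

theorem three_le_card_support_of_sign_eq_one [Fintype α] {π : Perm α} (hπ : sign π = 1)
    (hne : π ≠ 1) : 3 ≤ #π.support := by
  have h2 : #π.support ≠ 2 := fun h => by
    rw [(card_support_eq_two.mp h).sign_eq] at hπ
    exact absurd hπ (by decide)
  have := two_le_card_support_of_ne_one hne
  omega

theorem wordLengthLE_threeCycles_of_sign_eq_one [Fintype α] {π : Perm α} (hπ : sign π = 1) :
    WordLengthLE (threeCycles α) #π.support π := by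
  induction hk : #π.support using Nat.strong_induction_on generalizing π with
  | _ k ih =>
  subst hk
  rcases eq_or_ne π 1 with rfl | hne
  · exact WordLengthLE.one.mono (Nat.zero_le _)
  obtain ⟨a, ha⟩ : π.support.Nonempty :=
    nonempty_iff_ne_empty.mpr (support_eq_empty_iff.not.mpr hne)
  set b := π a with hb
  obtain ⟨z, hz, hzab⟩ : ∃ z ∈ π.support, z ∉ ({a, b} : Finset α) :=
    exists_mem_notMem_of_card_lt_card
      (card_le_two.trans_lt (three_le_card_support_of_sign_eq_one hπ hne))
  have hab : a ≠ b := fun h => mem_support.mp ha h.symm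
  simp only [mem_insert, mem_singleton, not_or] at hzab
  have hnodup : [a, b, z].Nodup := by simp [hab, Ne.symm hzab.1, Ne.symm hzab.2]
  set c := [a, b, z].formPerm
  have hca : c a = b := by simp [c, swap_apply_of_ne_of_ne hab (Ne.symm hzab.1)]
  have hc : c.support ⊆ π.support := (List.support_formPerm_le _).trans <| by
    simp [insert_subset_iff, ha, hz, b, mem_support.mp ha]
  have hsub : (c⁻¹ * π).support ⊂ π.support := by
    refine ssubset_of_subset_of_ne ((support_mul_le _ _).trans ?_) fun h => ?_
    · rw [support_inv]
      exact sup_le hc le_rfl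
    · have : a ∈ (c⁻¹ * π).support := h ▸ ha
      simp [mem_support, ← hb, ← hca] at this
  have hsign : sign (c⁻¹ * π) = 1 := by
    rw [map_mul, map_inv, sign_formPerm_three hab (Ne.symm hzab.2), hπ, inv_one, one_mul]
  have := (WordLengthLE.of_mem (S := threeCycles α) ⟨a, b, z, hnodup, rfl⟩).mul
    (ih _ (card_lt_card hsub) hsign rfl)
  rw [mul_inv_cancel_left] at this
  exact this.mono (by have := card_lt_card hsub; omega)

end ThreeCycles

section ThreeCyclesOn

variable {α : Type*} [DecidableEq α] {S : Set (Perm α)} {W : Finset α} {L : ℕ}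

def ThreeCycleWordLengthLE (S : Set (Perm α)) (L : ℕ) (W : Finset α) : Prop :=
  ∀ x ∈ W, ∀ y ∈ W, ∀ z ∈ W, [x, y, z].Nodup → WordLengthLE S L [x, y, z].formPerm

namespace ThreeCycleWordLengthLE

theorem of_card_le_two (hW : #W ≤ 2) : ThreeCycleWordLengthLE S L W := by
  intro x hx y hy z hz hxyz
  have hcard : #([x, y, z].toFinset) = 3 := List.toFinset_card_of_nodup hxyz
  have : #([x, y, z].toFinset) ≤ #W := card_le_card (by simp [insert_subset_iff, hx, hy, hz])
  omega

theorem conj (hW : ThreeCycleWordLengthLE S L W) {σ : Perm α} (hσ : WordLengthLE S 1 σ)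
    {x y z : α} (hx : x ∈ W) (hy : y ∈ W) (hz : z ∈ W) (hxyz : [x, y, z].Nodup) :
    WordLengthLE S (L + 2) [σ x, σ y, σ z].formPerm := by
  simpa only [conj_formPerm, List.map_cons, List.map_nil] using
    hσ.conj (hW x hx y hy z hz hxyz)

/-- Conjugating by `t = (a b u)` carries a 3-cycle `(x' y' b)` on `W` to `(t x' t y' u)`;
this reaches every `(x y u)` with `a ∉ {x, y}`. -/
theorem wordLengthLE_formPerm_insert_of_ne (hW : ThreeCycleWordLengthLE S L W) {a b u x y : α}
    (ha : a ∈ W) (hb : b ∈ W) (hu : u ∉ W) (hab : a ≠ b)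
    (ht : WordLengthLE S 1 [a, b, u].formPerm) (hx : x ∈ W) (hy : y ∈ W) (hxy : x ≠ y)
    (hxa : x ≠ a) (hya : y ≠ a) : WordLengthLE S (L + 2) [x, y, u].formPerm := by
  have hau : a ≠ u := fun h => hu (h ▸ ha)
  have hbu : b ≠ u := fun h => hu (h ▸ hb)
  set t := [a, b, u].formPerm
  have htb : t b = u := by
    simp [t, List.formPerm_cons_cons, swap_apply_of_ne_of_ne hau.symm hbu.symm]
  have hpre : ∀ v ∈ W, v ≠ a → ∃ v' ∈ W, t v' = v := by
    intro v hv hva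
    by_cases hvb : v = b
    · exact ⟨a, ha, by simp [t, hvb, List.formPerm_cons_cons, swap_apply_of_ne_of_ne hab hau]⟩
    · have hvu : v ≠ u := fun h => hu (h ▸ hv)
      exact ⟨v, hv, List.formPerm_apply_of_notMem (by simp [hva, hvb, hvu])⟩
  obtain ⟨x', hx', rfl⟩ := hpre x hx hxa
  obtain ⟨y', hy', rfl⟩ := hpre y hy hya
  have hnodup : [x', y', b].Nodup := by
    refine List.Nodup.of_map t ?_
    simp [htb, hxy, ne_of_mem_of_not_mem hx hu, ne_of_mem_of_not_mem hy hu]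
  simpa only [htb] using hW.conj ht hx' hy' hb hnodup

theorem insert (hW : ThreeCycleWordLengthLE S L W) {a b u : α} (ha : a ∈ W) (hb : b ∈ W)
    (hu : u ∉ W) (hab : a ≠ b) (ht : [a, b, u].formPerm ∈ S) :
    ThreeCycleWordLengthLE S (L + 2) (insert u W) := by
  have hau : a ≠ u := fun h => hu (h ▸ ha)
  have hbu : b ≠ u := fun h => hu (h ▸ hb)
  have ht₁ : WordLengthLE S 1 [a, b, u].formPerm := .of_mem ht
  have ht₂ : WordLengthLE S 1 [b, a, u].formPerm := by
    have : [b, a, u].formPerm = [a, b, u].formPerm⁻¹ := by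
      rw [← List.formPerm_reverse, ← List.formPerm_rotate _ (by simp [*, hab.symm]) 2]
      rfl
    rw [this]
    exact ht₁.inv
  have hnew : ∀ x ∈ W, ∀ y ∈ W, x ≠ y → WordLengthLE S (L + 2) [x, y, u].formPerm := by
    intro x hx y hy hxy
    by_cases hxya : x ≠ a ∧ y ≠ a
    · exact hW.wordLengthLE_formPerm_insert_of_ne ha hb hu hab ht₁ hx hy hxy hxya.1 hxya.2
    by_cases hxyb : x ≠ b ∧ y ≠ b
    · exact hW.wordLengthLE_formPerm_insert_of_ne hb ha hu hab.symm ht₂ hx hy hxy hxyb.1 hxyb.2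
    obtain ⟨rfl, rfl⟩ | ⟨rfl, rfl⟩ : (x = a ∧ y = b) ∨ (x = b ∧ y = a) := by grind
    exacts [ht₁.mono (by omega), ht₂.mono (by omega)]
  intro x hx y hy z hz hxyz
  obtain ⟨⟨hxy, hxz⟩, hyz⟩ : (x ≠ y ∧ x ≠ z) ∧ y ≠ z := by simpa using hxyz
  rw [mem_insert] at hx hy hz
  rcases hx with rfl | hx
  · rw [← List.formPerm_rotate_one _ hxyz]
    exact hnew y (hy.resolve_left hxy.symm) z (hz.resolve_left hxz.symm) hyz
  rcases hy with rfl | hy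
  · rw [← List.formPerm_rotate _ hxyz 2]
    exact hnew z (hz.resolve_left hyz.symm) x hx hxz.symm
  rcases hz with rfl | hz
  · exact hnew x hx y hy hxy
  · exact (hW x hx y hy z hz hxyz).mono (by omega)

end ThreeCycleWordLengthLE

end ThreeCyclesOn

section Walk

variable {α : Type*} [DecidableEq α] {m : ℕ}

def visited (w : Fin m → α) (k : ℕ) : Finset α :=
  (univ.filter fun j : Fin m => (j : ℕ) ≤ k).image w

theorem visited_zero (w : Fin m → α) (h : 0 < m) : visited w 0 = {w ⟨0, h⟩} := by
  ext v
  simp only [visited, mem_image, mem_filter, mem_univ, true_and, Nat.le_zero, mem_singleton]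
  exact ⟨fun ⟨j, hj, hv⟩ => hv ▸ congrArg w (Fin.ext hj), fun hv => ⟨_, rfl, hv.symm⟩⟩

theorem visited_succ (w : Fin m → α) {k : ℕ} (h : k + 1 < m) :
    visited w (k + 1) = insert (w ⟨k + 1, h⟩) (visited w k) := by
  ext v
  simp only [visited, mem_image, mem_filter, mem_univ, true_and, mem_insert]
  constructor
  · rintro ⟨j, hj, rfl⟩
    rcases Nat.le_succ_iff.mp hj with hj | hj
    · exact .inr ⟨j, hj, rfl⟩
    · exact .inl (congrArg w (Fin.ext hj))
  · rintro (rfl | ⟨j, hj, rfl⟩)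
    exacts [⟨_, le_rfl, rfl⟩, ⟨j, hj.trans k.le_succ, rfl⟩]

theorem mem_visited (w : Fin m → α) {j k : ℕ} (h : j < m) (hjk : j ≤ k) :
    w ⟨j, h⟩ ∈ visited w k :=
  mem_image_of_mem w (by simpa using hjk)

theorem visited_eq_univ [Fintype α] {w : Fin m → α} (hw : Function.Surjective w) :
    visited w (m - 1) = univ := by
  refine eq_univ_of_forall fun v => ?_
  obtain ⟨j, rfl⟩ := hw v
  exact mem_visited w j.2 (by omega)

end Walk

theorem threeCycleWordLengthLE_visited {n m : ℕ} (w : Fin m → Fin n)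
    (hw : ∀ k (h : k + 2 < m), w ⟨k, by omega⟩ ≠ w ⟨k + 1, by omega⟩) :
    ∀ k (hk : k < m),
      ThreeCycleWordLengthLE (walkThreeCycles n m w) (2 * #(visited w k)) (visited w k)
  | 0, hk => .of_card_le_two (by simp [visited_zero w hk])
  | 1, hk => .of_card_le_two <| by
    rw [visited_succ w hk, visited_zero w (by omega)]
    exact card_insert_le _ _
  | k + 2, hk => by
    have ih := threeCycleWordLengthLE_visited w hw (k + 1) (by omega)
    rw [visited_succ w hk]
    by_cases hu : w ⟨k + 2, hk⟩ ∈ visited w (k + 1)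
    · rwa [insert_eq_of_mem hu]
    · rw [card_insert_of_notMem hu]
      exact ih.insert (mem_visited w _ k.le_succ) (mem_visited w _ le_rfl) hu (hw k hk)
        ⟨k, hk, rfl⟩

/-- There is a constant `K` such that the following holds. For `V = Fin n`,
`m ≥ 3` and a surjective map `w : Fin m → Fin n` in which any three consecutive values are
pairwise distinct, every even permutation of `V` is a product of at most `K * n ^ 3`
elements of the set `𝒞` of 3-cycles `(w(i-1) w(i) w(i+1))` and their inverses. -/
theorem walk_three_cycles_generate_even_cubic :
    ∃ K : ℕ, ∀ n m : ℕ, 3 ≤ m → ∀ w : Fin m → Fin n,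
      Function.Surjective w →
      (∀ i : ℕ, ∀ h : i + 2 < m,
        w ⟨i, by omega⟩ ≠ w ⟨i + 1, by omega⟩ ∧
        w ⟨i + 1, by omega⟩ ≠ w ⟨i + 2, h⟩ ∧
        w ⟨i, by omega⟩ ≠ w ⟨i + 2, h⟩) →
      ∀ π : Equiv.Perm (Fin n), Equiv.Perm.sign π = 1 →
        ∃ l : List (Equiv.Perm (Fin n)),
          l.length ≤ K * n ^ 3 ∧
          (∀ g ∈ l, g ∈ walkThreeCycles n m w ∨ g⁻¹ ∈ walkThreeCycles n m w) ∧
          l.prod = π := by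
  refine ⟨2, fun n m hm w hsurj hdist π hπ => ?_⟩
  have hcycles : ThreeCycleWordLengthLE (walkThreeCycles n m w) (2 * n) univ := by
    simpa [visited_eq_univ hsurj] using
      threeCycleWordLengthLE_visited w (fun k hk => (hdist k hk).1) (m - 1) (by omega)
  have hπ' := (wordLengthLE_threeCycles_of_sign_eq_one hπ).comp
    fun _ ⟨x, y, z, hxyz, hs⟩ =>
      hs ▸ hcycles x (mem_univ _) y (mem_univ _) z (mem_univ _) hxyz
  refine hπ'.mono ?_
  calc 2 * n * #π.support ≤ 2 * n * n := by gcongr; simpa using card_le_univ π.support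
    _ ≤ 2 * n * (n * n) := Nat.mul_le_mul_left _ (Nat.le_mul_self n)
    _ = 2 * n ^ 3 := by ring
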